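/- arXiv:2511.12620 — 2 statements merged into one kernel-verified Lean document; each statement's English description precedes it below -/
import Mathlib

section
/- Let m ≥ 2, and for t = 1, …, j let wₜ ∈ ℝ^m with 1ᵀ wₜ = 0 and Wₜ ∈ ℝ^{m×m} with 1ᵀ Wₜ = 1ᵀ and Wₜ 1 = 1. Define W̌ₜ = (1/√(m-1)) wₜ 1ᵀ + Wₜ, Wⱼᵖʳᵒᵈ = W₁ ⋯ Wⱼ (with W₀ᵖʳᵒᵈ = I), and wⱼᵖʳᵒᵈ = Σ_{t=1}^{j} W_{t-1}ᵖʳᵒᵈ wₜ. Then the product W̌ⱼᵖʳᵒᵈ := W̌₁ ⋯ W̌ⱼ decomposes as W̌ⱼᵖʳᵒᵈ = (1/√(m-1)) wⱼᵖʳᵒᵈ 1ᵀ + Wⱼᵖʳᵒᵈ. -/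
open Matrix

noncomputable def ones (m : ℕ) : Fin m → ℝ := fun _ => 1

noncomputable def eMean {n m : ℕ} (X : Matrix (Fin n) (Fin m) ℝ) : Fin n → ℝ :=
  fun i => (1 / (m : ℝ)) * ∑ j, X i j

noncomputable def pert {n m : ℕ} (X : Matrix (Fin n) (Fin m) ℝ) : Matrix (Fin n) (Fin m) ℝ :=
  X - Matrix.vecMulVec (eMean X) (ones m)

/-- Apply a linear map to each column of a matrix. -/
noncomputable def appCols {n m : ℕ} (M : (Fin n → ℝ) →ₗ[ℝ] (Fin n → ℝ))
    (X : Matrix (Fin n) (Fin m) ℝ) : Matrix (Fin n) (Fin m) ℝ :=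
  Matrix.of fun i j => M (fun i' => X i' j) i

/-- Ordered product W 1 * W 2 * ⋯ * W j (with empty product = identity). -/
noncomputable def prodUpTo {m : ℕ} (W : ℕ → Matrix (Fin m) (Fin m) ℝ) : ℕ → Matrix (Fin m) (Fin m) ℝ
  | 0 => 1
  | t + 1 => prodUpTo W t * W (t + 1)

namespace Matrix

variable {n R : Type*} [Fintype n] [CommRing R]

theorem smul_vecMulVec_add_mul_smul_vecMulVec_add (c : R) (u w v : n → R)
    (P W : Matrix n n R) (hw : v ⬝ᵥ w = 0) (hW : v ᵥ* W = v) :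
    (c • vecMulVec u v + P) * (c • vecMulVec w v + W) =
      c • vecMulVec (u + P *ᵥ w) v + P * W := by
  rw [add_mul, mul_add, mul_add, Matrix.smul_mul, Matrix.mul_smul, Matrix.smul_mul,
    Matrix.mul_smul, vecMulVec_mul_vecMulVec, hw, zero_smul, vecMulVec_zero, smul_zero,
    vecMulVec_mul, hW, mul_vecMulVec, add_vecMulVec, smul_add,
    smul_zero, zero_add, add_assoc]

end Matrix

theorem prodUpTo_smul_vecMulVec_add {m : ℕ} (c : ℝ) (v : Fin m → ℝ) (j : ℕ)
    (w : ℕ → Fin m → ℝ) (W Wcheck : ℕ → Matrix (Fin m) (Fin m) ℝ)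
    (hw : ∀ t, 1 ≤ t → t ≤ j → v ⬝ᵥ w t = 0)
    (hW : ∀ t, 1 ≤ t → t ≤ j → v ᵥ* W t = v)
    (hWcheck : ∀ t, 1 ≤ t → t ≤ j → Wcheck t = c • vecMulVec (w t) v + W t) :
    prodUpTo Wcheck j =
      c • vecMulVec (∑ t ∈ Finset.range j, prodUpTo W t *ᵥ w (t + 1)) v + prodUpTo W j := by
  induction j with
  | zero => simp [prodUpTo]
  | succ j ih =>
    rw [prodUpTo, prodUpTo, Finset.sum_range_succ,
      ih (fun t h1 h2 => hw t h1 (by omega)) (fun t h1 h2 => hW t h1 (by omega))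
        (fun t h1 h2 => hWcheck t h1 (by omega)),
      hWcheck (j + 1) (by omega) le_rfl]
    exact smul_vecMulVec_add_mul_smul_vecMulVec_add _ _ _ _ _ _
      (hw (j + 1) (by omega) le_rfl) (hW (j + 1) (by omega) le_rfl)

theorem stmt5_general {m : ℕ} (j : ℕ)
    (w : ℕ → Fin m → ℝ) (W Wcheck : ℕ → Matrix (Fin m) (Fin m) ℝ)
    (hw : ∀ t, 1 ≤ t → t ≤ j → ∑ i, w t i = 0)
    (hW1 : ∀ t, 1 ≤ t → t ≤ j → Matrix.vecMul (ones m) (W t) = ones m)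
    (hWcheck : ∀ t, 1 ≤ t → t ≤ j →
      Wcheck t = (1 / Real.sqrt ((m : ℝ) - 1)) • Matrix.vecMulVec (w t) (ones m) + W t) :
    prodUpTo Wcheck j =
      (1 / Real.sqrt ((m : ℝ) - 1)) •
        Matrix.vecMulVec (∑ t ∈ Finset.range j, (prodUpTo W t).mulVec (w (t + 1))) (ones m) +
      prodUpTo W j :=
  prodUpTo_smul_vecMulVec_add _ _ j w W Wcheck
    (fun t h1 h2 => by simpa [ones, dotProduct] using hw t h1 h2) hW1 hWcheck

/-- the product of ETKF ensemble transform matrices decomposes as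
`W̌ⱼᵖʳᵒᵈ = (1/√(m-1)) wⱼᵖʳᵒᵈ 1ᵀ + Wⱼᵖʳᵒᵈ`. -/
theorem stmt5 {m : ℕ} (hm : 2 ≤ m) (j : ℕ)
    (w : ℕ → Fin m → ℝ) (W Wcheck : ℕ → Matrix (Fin m) (Fin m) ℝ)
    (hw : ∀ t, 1 ≤ t → t ≤ j → ∑ i, w t i = 0)
    (hW1 : ∀ t, 1 ≤ t → t ≤ j → Matrix.vecMul (ones m) (W t) = ones m)
    (hW2 : ∀ t, 1 ≤ t → t ≤ j → (W t).mulVec (ones m) = ones m)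
    (hWcheck : ∀ t, 1 ≤ t → t ≤ j →
      Wcheck t = (1 / Real.sqrt ((m : ℝ) - 1)) • Matrix.vecMulVec (w t) (ones m) + W t) :
    prodUpTo Wcheck j =
      (1 / Real.sqrt ((m : ℝ) - 1)) •
        Matrix.vecMulVec (∑ t ∈ Finset.range j, (prodUpTo W t).mulVec (w (t + 1))) (ones m) +
      prodUpTo W j :=
  stmt5_general j w W Wcheck hw hW1 hWcheck
end

section
/- Let X ∈ ℝ^{n×m} have ensemble covariance P = (1/(m-1)) δX δXᵀ, and let W̌ ∈ ℝ^{m×m} satisfy 1ᵀ W̌ = 1ᵀ. If additionally W̌ = (1/√(m-1)) w 1ᵀ + W with 1ᵀ w = 0 and 1ᵀ W = 1ᵀ, then the ensemble covariance of X W̌ equals (1/(m-1)) δX W Q Wᵀ δXᵀ where Q = I − (1/m) J is the centering projection and J = 11ᵀ. In particular, if W 1 = 1, the covariance of X W̌ is (1/(m-1)) δX W Wᵀ δXᵀ − (1/(m-1))(1/m) δX W J Wᵀ δXᵀ, and when W is the symmetric square root with W 1 = 1, this simplifies using δX (1/m) W J Wᵀ δXᵀ = (1/m) δX J δXᵀ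 = 0, giving covariance (1/(m-1)) δX W Wᵀ δXᵀ. -/
open Matrix

/-- Ensemble covariance `P = (1/(m-1)) δX δXᵀ`. -/
noncomputable def eCov {n m : ℕ} (X : Matrix (Fin n) (Fin m) ℝ) : Matrix (Fin n) (Fin n) ℝ :=
  (1 / ((m : ℝ) - 1)) • (pert X * (pert X)ᵀ)

/-!
With `J = 1 1ᵀ` and the centering matrix `Q = I - J / m` we have `δX = X Q`, `Q` is symmetric
and idempotent, and `v 1ᵀ Q = 0` for every `v`: the centering kills the rank-one mean update
`w 1ᵀ / √(m-1)` of `W̌`. If `1ᵀ W = 1ᵀ` then `J W = J`, hence `Q W Q = W Q` and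
`δ(X W) = δX W Q`, so the covariance is `δX W Q Qᵀ Wᵀ δXᵀ / (m-1) = δX W Q Wᵀ δXᵀ / (m-1)`.
If moreover `W 1 = 1`, then `W Q = W - J / m` and `δX J = 0`.
-/

noncomputable def centering (m : ℕ) : Matrix (Fin m) (Fin m) ℝ :=
  1 - (1 / (m : ℝ)) • vecMulVec (ones m) (ones m)

lemma ones_dotProduct_ones (m : ℕ) : ones m ⬝ᵥ ones m = m := by
  simp [ones, dotProduct]

lemma centering_transpose (m : ℕ) : (centering m)ᵀ = centering m := by
  simp [centering]

lemma pert_eq_mul_centering {n m : ℕ} (X : Matrix (Fin n) (Fin m) ℝ) :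
    pert X = X * centering m := by
  have hmean : eMean X = (1 / (m : ℝ)) • X *ᵥ ones m := by
    ext i
    simp [eMean, mulVec, dotProduct, ones]
  rw [pert, centering, Matrix.mul_sub, Matrix.mul_one, Matrix.mul_smul, mul_vecMulVec, hmean,
    smul_vecMulVec]

section

variable {m : ℕ} (hm : m ≠ 0)
include hm

lemma vecMulVec_ones_mul_centering (v : Fin m → ℝ) :
    vecMulVec v (ones m) * centering m = 0 := by
  rw [centering, Matrix.mul_sub, Matrix.mul_one, mul_smul_comm, vecMulVec_mul_vecMulVec,
    ones_dotProduct_ones, vecMulVec_smul, smul_smul, one_div, inv_mul_cancel₀ (by exact_mod_cast hm),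
    one_smul, sub_self]

lemma centering_mul_vecMulVec_ones (v : Fin m → ℝ) :
    centering m * vecMulVec (ones m) v = 0 := by
  simpa [transpose_mul, centering_transpose] using
    congrArg transpose (vecMulVec_ones_mul_centering hm v)

lemma centering_mul_self : centering m * centering m = centering m := by
  nth_rw 2 [centering]
  rw [Matrix.mul_sub, Matrix.mul_one, mul_smul_comm, centering_mul_vecMulVec_ones hm, smul_zero,
    sub_zero]

lemma mul_centering_mul_transpose {l : Type*} (A : Matrix l (Fin m) ℝ) :
    A * centering m * (A * centering m)ᵀ = A * centering m * Aᵀ := by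
  rw [transpose_mul, centering_transpose, ← Matrix.mul_assoc, Matrix.mul_assoc A,
    centering_mul_self hm]

lemma pert_mul_vecMulVec_ones {n : ℕ} (X : Matrix (Fin n) (Fin m) ℝ) (v : Fin m → ℝ) :
    pert X * vecMulVec (ones m) v = 0 := by
  rw [pert_eq_mul_centering, Matrix.mul_assoc, centering_mul_vecMulVec_ones hm, Matrix.mul_zero]

lemma centering_mul_mul_centering {W : Matrix (Fin m) (Fin m) ℝ} (hW : ones m ᵥ* W = ones m) :
    centering m * W * centering m = W * centering m := by
  nth_rw 1 [centering]
  rw [Matrix.sub_mul, Matrix.sub_mul, Matrix.one_mul, smul_mul_assoc, smul_mul_assoc, vecMulVec_mul,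
    hW, vecMulVec_ones_mul_centering hm, smul_zero, sub_zero]

lemma pert_mul {n : ℕ} (X : Matrix (Fin n) (Fin m) ℝ) {W : Matrix (Fin m) (Fin m) ℝ}
    (hW : ones m ᵥ* W = ones m) :
    pert (X * W) = pert X * W * centering m := by
  rw [pert_eq_mul_centering, pert_eq_mul_centering, Matrix.mul_assoc X, Matrix.mul_assoc X,
    Matrix.mul_assoc X, centering_mul_mul_centering hm hW]

lemma pert_mul_smul_vecMulVec_ones_add {n : ℕ} (X : Matrix (Fin n) (Fin m) ℝ) (a : ℝ)
    (v : Fin m → ℝ) (W : Matrix (Fin m) (Fin m) ℝ) :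
    pert (X * (a • vecMulVec v (ones m) + W)) = pert (X * W) := by
  rw [pert_eq_mul_centering, pert_eq_mul_centering, Matrix.mul_assoc, Matrix.mul_assoc,
    Matrix.add_mul, smul_mul_assoc, vecMulVec_ones_mul_centering hm, smul_zero, zero_add]

lemma eCov_mul {n : ℕ} (X : Matrix (Fin n) (Fin m) ℝ) {W : Matrix (Fin m) (Fin m) ℝ}
    (hW : ones m ᵥ* W = ones m) :
    eCov (X * W) = (1 / ((m : ℝ) - 1)) • (pert X * W * centering m * Wᵀ * (pert X)ᵀ) := by
  rw [eCov, pert_mul hm X hW, mul_centering_mul_transpose hm, transpose_mul, ← Matrix.mul_assoc]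

lemma pert_mul_mul_centering {n : ℕ} (X : Matrix (Fin n) (Fin m) ℝ)
    {W : Matrix (Fin m) (Fin m) ℝ} (hW : W *ᵥ ones m = ones m) :
    pert X * W * centering m = pert X * W := by
  rw [Matrix.mul_assoc, centering, Matrix.mul_sub, Matrix.mul_one, mul_smul_comm, mul_vecMulVec, hW,
    Matrix.mul_sub, Matrix.mul_smul, pert_mul_vecMulVec_ones hm, smul_zero, sub_zero]

end

theorem stmt18_general {n m : ℕ} (hm : 2 ≤ m)
    (X : Matrix (Fin n) (Fin m) ℝ)
    (Wcheck : Matrix (Fin m) (Fin m) ℝ)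
    (w : Fin m → ℝ)
    (W : Matrix (Fin m) (Fin m) ℝ)
    (hW : Matrix.vecMul (ones m) W = ones m)
    (hdec : Wcheck = (1 / Real.sqrt ((m : ℝ) - 1)) • Matrix.vecMulVec w (ones m) + W) :
    (eCov (X * Wcheck) = (1 / ((m : ℝ) - 1)) •
      (pert X * W *
        ((1 : Matrix (Fin m) (Fin m) ℝ) -
          (1 / (m : ℝ)) • Matrix.vecMulVec (ones m) (ones m)) * Wᵀ * (pert X)ᵀ)) ∧
    (W.mulVec (ones m) = ones m →
      eCov (X * Wcheck) = (1 / ((m : ℝ) - 1)) • (pert X * W * Wᵀ * (pert X)ᵀ)) := by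
  have hm0 : m ≠ 0 := by omega
  have hcov : eCov (X * Wcheck) =
      (1 / ((m : ℝ) - 1)) • (pert X * W * centering m * Wᵀ * (pert X)ᵀ) := by
    rw [← eCov_mul hm0 X hW, eCov, eCov, hdec, pert_mul_smul_vecMulVec_ones_add hm0]
  refine ⟨hcov, fun hW1 => ?_⟩
  rw [hcov, pert_mul_mul_centering hm0 X hW1]

/-- transformation of the ensemble covariance under right
multiplication by an ensemble transform matrix. -/
theorem stmt18 {n m : ℕ} (hm : 2 ≤ m)
    (X : Matrix (Fin n) (Fin m) ℝ)
    (Wcheck : Matrix (Fin m) (Fin m) ℝ)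
    (hWc : Matrix.vecMul (ones m) Wcheck = ones m)
    (w : Fin m → ℝ) (hw : ∑ i, w i = 0)
    (W : Matrix (Fin m) (Fin m) ℝ)
    (hW : Matrix.vecMul (ones m) W = ones m)
    (hdec : Wcheck = (1 / Real.sqrt ((m : ℝ) - 1)) • Matrix.vecMulVec w (ones m) + W) :
    (eCov (X * Wcheck) = (1 / ((m : ℝ) - 1)) •
      (pert X * W *
        ((1 : Matrix (Fin m) (Fin m) ℝ) -
          (1 / (m : ℝ)) • Matrix.vecMulVec (ones m) (ones m)) * Wᵀ * (pert X)ᵀ)) ∧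
    (W.mulVec (ones m) = ones m →
      eCov (X * Wcheck) = (1 / ((m : ℝ) - 1)) • (pert X * W * Wᵀ * (pert X)ᵀ)) :=
  stmt18_general hm X Wcheck w W hW hdec
end
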